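/- Let $j:[0,1]\to I\overline{\mathbb{R}}$, $j(x)=[x,x]$, $\lambda$ Lebesgue measure on $[0,1]$, and $K=j([0,1])$. Then every compact saturated support $Q$ of the image measure $j[\lambda]$ on $I\overline{\mathbb{R}}$ contains $K$; moreover $K$ itself is a measurable support of $j[\lambda]$ with $j[\lambda](K)=1$, and the smallest closed support of $j[\lambda]$ is $\downarrow K$. -/

import Mathlib

open MeasureTheory

noncomputable section

/-- The interval domain `I ℝ̄`, ordered by reverse inclusion. -/
def IR : Type := {p : EReal × EReal // p.1 ≤ p.2}

namespace IR

instance : PartialOrder IR where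
  le x y := x.1.1 ≤ y.1.1 ∧ y.1.2 ≤ x.1.2
  le_refl x := ⟨le_rfl, le_rfl⟩
  le_trans x y z h h' := ⟨h.1.trans h'.1, h'.2.trans h.2⟩
  le_antisymm x y h h' :=
    Subtype.ext (Prod.ext (le_antisymm h.1 h'.1) (le_antisymm h'.2 h.2))

/-- `I ℝ̄` carries its Scott topology. -/
instance : TopologicalSpace IR := Topology.scott IR Set.univ

/-- `I ℝ̄` carries the Borel σ-algebra of its Scott topology. -/
instance : MeasurableSpace IR := borel IR

end IR

/-- A subset is saturated if it is the intersection of its open neighborhoods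
(equivalently: upward closed for the specialization order). -/
def IsSaturated (Q : Set IR) : Prop :=
  Q = ⋂₀ {U : Set IR | IsOpen U ∧ Q ⊆ U}

/-- `E` is a support of `μ`: measurable sets with the same trace on `E` have the same
measure. -/
def IsSupport (μ : Measure IR) (E : Set IR) : Prop :=
  ∀ A B : Set IR, MeasurableSet A → MeasurableSet B → A ∩ E = B ∩ E → μ A = μ B

/-- The embedding `j : [0,1] → I ℝ̄`, `j(x) = [x,x]`. -/
def jmap (x : ℝ) : IR := ⟨((x : EReal), (x : EReal)), le_rfl⟩

/-- `K`: the image of the unit interval in `I ℝ̄`. -/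
def KIR : Set IR := jmap '' Set.Icc (0 : ℝ) 1

/-- Downward closure in `I ℝ̄`. -/
def dclIR (A : Set IR) : Set IR := {x | ∃ y ∈ A, x ≤ y}

/-- The image measure `j[λ]` of Lebesgue measure on `[0,1]` on `I ℝ̄`. -/
def lebIR : Measure IR := Measure.map jmap ((volume : Measure ℝ).restrict (Set.Icc 0 1))

/-!
The sets of intervals with lower endpoint `> c`, or upper endpoint `< c`, are Scott-open, so
both endpoint maps are Borel; hence `K`, the set of degenerate intervals `[t, t]` with
`t ∈ [0, 1]`, is Borel and carries all of `j[λ]`. The map `j` is Scott-continuous. If a support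
`E` missed some `[t, t]` with `t ∈ [0, 1]`, there would be a measurable `A ⊇ E` with `j⁻¹(Aᶜ)` a
neighbourhood of `t`: for closed `E` take `A = E`; for compact saturated `E`, compactness puts
`E` inside the open set of intervals lying strictly to one side of some `[t - δ, t + δ]`. Then
`j[λ](Aᶜ) = 0`, yet a neighbourhood of a point of `[0, 1]` meets `[0, 1]` in positive measure.
-/

open Set Topology

namespace IR

instance : Topology.IsScott IR univ := ⟨rfl⟩

instance : BorelSpace IR := ⟨rfl⟩

lemma le_iff {x y : IR} : x ≤ y ↔ x.1.1 ≤ y.1.1 ∧ y.1.2 ≤ x.1.2 := Iff.rfl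

lemma isLUB_image_fst {d : Set IR} {a : IR} (ha : IsLUB d a) :
    IsLUB ((fun z : IR => z.1.1) '' d) a.1.1 := by
  refine ⟨?_, fun b hb => ?_⟩
  · rintro _ ⟨z, hz, rfl⟩
    exact (ha.1 hz).1
  · have hle : ∀ z ∈ d, z.1.1 ≤ min b a.1.2 := fun z hz =>
      le_min (hb ⟨z, hz, rfl⟩) (((ha.1 hz).1).trans a.2)
    have hub : (⟨(min b a.1.2, a.1.2), min_le_right _ _⟩ : IR) ∈ upperBounds d :=
      fun z hz => ⟨hle z hz, (ha.1 hz).2⟩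
    exact (ha.2 hub).1.trans (min_le_left _ _)

lemma isGLB_image_snd {d : Set IR} {a : IR} (ha : IsLUB d a) :
    IsGLB ((fun z : IR => z.1.2) '' d) a.1.2 := by
  refine ⟨?_, fun b hb => ?_⟩
  · rintro _ ⟨z, hz, rfl⟩
    exact (ha.1 hz).2
  · have hge : ∀ z ∈ d, max b a.1.1 ≤ z.1.2 := fun z hz =>
      max_le (hb ⟨z, hz, rfl⟩) (a.2.trans (ha.1 hz).2)
    have hub : (⟨(a.1.1, max b a.1.1), le_max_right _ _⟩ : IR) ∈ upperBounds d :=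
      fun z hz => ⟨(ha.1 hz).1, hge z hz⟩
    exact (le_max_left _ _).trans (ha.2 hub).2

lemma isOpen_lt_fst (c : EReal) : IsOpen {y : IR | c < y.1.1} := by
  refine (Topology.IsScott.isOpen_iff_isUpperSet_and_dirSupInaccOn (D := univ)).2
    ⟨fun x y hxy hx => hx.trans_le (le_iff.1 hxy).1, fun d _ _ _ a ha hca => ?_⟩
  obtain ⟨_, ⟨z, hz, rfl⟩, hcz⟩ := (lt_isLUB_iff (isLUB_image_fst ha)).1 hca
  exact ⟨z, hz, hcz⟩

lemma isOpen_snd_lt (c : EReal) : IsOpen {y : IR | y.1.2 < c} := by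
  refine (Topology.IsScott.isOpen_iff_isUpperSet_and_dirSupInaccOn (D := univ)).2
    ⟨fun x y hxy hx => (le_iff.1 hxy).2.trans_lt hx, fun d _ _ _ a ha hac => ?_⟩
  obtain ⟨_, ⟨z, hz, rfl⟩, hzc⟩ := (isGLB_lt_iff (isGLB_image_snd ha)).1 hac
  exact ⟨z, hz, hzc⟩

lemma measurable_fst : Measurable fun y : IR => y.1.1 :=
  measurable_of_Ioi fun c => (isOpen_lt_fst c).measurableSet

lemma measurable_snd : Measurable fun y : IR => y.1.2 :=
  measurable_of_Iio fun c => (isOpen_snd_lt c).measurableSet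

end IR

lemma IsSaturated.isUpperSet {Q : Set IR} (hQ : IsSaturated Q) : IsUpperSet Q := by
  rw [hQ]
  exact isUpperSet_sInter fun U hU => Topology.IsScott.isUpperSet_of_isOpen (D := univ) hU.1

def intervalsAround (t : ℝ) : Set IR := {x | x.1.1 < t ∧ (t : EReal) < x.1.2}

lemma nonempty_intervalsAround (t : ℝ) : (intervalsAround t).Nonempty :=
  ⟨⟨(⊥, ⊤), bot_le⟩, EReal.bot_lt_coe t, EReal.coe_lt_top t⟩

lemma isLUB_intervalsAround (t : ℝ) : IsLUB (intervalsAround t) (jmap t) := by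
  refine ⟨fun x hx => ⟨hx.1.le, hx.2.le⟩, fun b hb => ⟨?_, ?_⟩⟩
  · by_contra! h
    obtain ⟨c, hbc, hct⟩ := exists_between h
    have hc := @hb ⟨(c, ⊤), le_top⟩ ⟨hct, EReal.coe_lt_top t⟩
    exact (hbc.trans_le (IR.le_iff.1 hc).1).false
  · by_contra! h
    obtain ⟨c, htc, hcb⟩ := exists_between h
    have hc := @hb ⟨(⊥, c), bot_le⟩ ⟨EReal.bot_lt_coe t, htc⟩
    exact (hcb.trans_le (IR.le_iff.1 hc).2).false

lemma directedOn_intervalsAround (t : ℝ) : DirectedOn (· ≤ ·) (intervalsAround t) := by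
  rintro x hx y hy
  refine ⟨⟨(max x.1.1 y.1.1, min x.1.2 y.1.2), ?_⟩, ⟨max_lt hx.1 hy.1, lt_min hx.2 hy.2⟩,
    ⟨le_max_left _ _, min_le_left _ _⟩, ⟨le_max_right _ _, min_le_right _ _⟩⟩
  exact (max_lt hx.1 hy.1).le.trans (lt_min hx.2 hy.2).le

lemma continuous_jmap : Continuous jmap := by
  -- A Scott-open `U ∋ [t, t]` contains some `x` with `t` in its interior, and then, being an
  -- upper set, every `[s, s]` with `s` in the interior of `x`.
  refine continuous_def.2 fun U hU => isOpen_iff_forall_mem_open.2 fun t ht => ?_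
  obtain ⟨hUup, hUinacc⟩ :=
    (Topology.IsScott.isOpen_iff_isUpperSet_and_dirSupInaccOn (D := univ)).1 hU
  obtain ⟨x, ⟨hxt, htx⟩, hxU⟩ := hUinacc (mem_univ _) (nonempty_intervalsAround t)
    (directedOn_intervalsAround t) (isLUB_intervalsAround t) ht
  exact ⟨(↑) ⁻¹' Ioo x.1.1 x.1.2, fun s hs => hUup ⟨hs.1.le, hs.2.le⟩ hxU,
    isOpen_Ioo.preimage continuous_coe_real_ereal, ⟨hxt, htx⟩⟩

lemma measurable_jmap : Measurable jmap := continuous_jmap.measurable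

lemma lebIR_apply {S : Set IR} (hS : MeasurableSet S) :
    lebIR S = volume (jmap ⁻¹' S ∩ Icc 0 1) := by
  rw [lebIR, Measure.map_apply measurable_jmap hS, Measure.restrict_apply (measurable_jmap hS)]

lemma IsSupport.mono {μ : Measure IR} {E F : Set IR} (hE : IsSupport μ E) (hEF : E ⊆ F) :
    IsSupport μ F := fun A B hA hB hAB => hE A B hA hB <| by
  rw [← inter_eq_self_of_subset_right hEF, ← inter_assoc, hAB, inter_assoc]

lemma isSupport_of_measure_compl_eq_zero {μ : Measure IR} {E : Set IR} (hE : μ Eᶜ = 0) :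
    IsSupport μ E := fun A B hA hB hAB => by
  rw [← Measure.restrict_eq_self_of_ae_mem (μ := μ) (measure_mono_null (fun x hx => hx) hE),
    Measure.restrict_apply hA, Measure.restrict_apply hB, hAB]

lemma IsSupport.measure_compl_eq_zero {μ : Measure IR} {E A : Set IR} (hE : IsSupport μ E)
    (hA : MeasurableSet A) (hEA : E ⊆ A) : μ Aᶜ = 0 := by
  simpa using hE Aᶜ ∅ hA.compl .empty (by grind)

lemma volume_inter_Icc_pos {a b t : ℝ} {N : Set ℝ} (hab : a ≠ b) (ht : t ∈ Icc a b)
    (hN : N ∈ 𝓝 t) : 0 < volume (N ∩ Icc a b) := by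
  obtain ⟨V, hVN, hV, htV⟩ := mem_nhds_iff.1 hN
  have hne : (V ∩ Ioo a b).Nonempty := mem_closure_iff.1 (closure_Ioo hab ▸ ht) V hV htV
  exact ((hV.inter isOpen_Ioo).measure_pos volume hne).trans_le
    (measure_mono (inter_subset_inter hVN Ioo_subset_Icc_self))

lemma lebIR_pos {S : Set IR} (hS : MeasurableSet S) {t : ℝ} (ht : t ∈ Icc 0 1)
    (hSt : jmap ⁻¹' S ∈ 𝓝 t) : 0 < lebIR S := by
  rw [lebIR_apply hS]
  exact volume_inter_Icc_pos zero_ne_one ht hSt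

lemma IsSupport.jmap_preimage_compl_notMem_nhds {E A : Set IR} (hE : IsSupport lebIR E)
    (hA : MeasurableSet A) (hEA : E ⊆ A) {t : ℝ} (ht : t ∈ Icc 0 1) : jmap ⁻¹' Aᶜ ∉ 𝓝 t :=
  fun h => (lebIR_pos hA.compl ht h).ne' (hE.measure_compl_eq_zero hA hEA)

lemma KIR_subset_of_isClosed {C : Set IR} (hC : IsClosed C) (hCs : IsSupport lebIR C) :
    KIR ⊆ C := by
  rintro _ ⟨t, ht, rfl⟩
  by_contra h
  exact hCs.jmap_preimage_compl_notMem_nhds hC.measurableSet subset_rfl ht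
    (continuous_jmap.continuousAt.preimage_mem_nhds (hC.isOpen_compl.mem_nhds h))

def awayFrom (t δ : ℝ) : Set IR :=
  {y | ((t + δ : ℝ) : EReal) < y.1.1} ∪ {y | y.1.2 < ((t - δ : ℝ) : EReal)}

lemma isOpen_awayFrom (t δ : ℝ) : IsOpen (awayFrom t δ) :=
  (IR.isOpen_lt_fst _).union (IR.isOpen_snd_lt _)

lemma awayFrom_subset_awayFrom {t δ δ' : ℝ} (h : δ' ≤ δ) : awayFrom t δ ⊆ awayFrom t δ' := by
  rintro y (hy | hy)
  · exact .inl (lt_of_le_of_lt (EReal.coe_le_coe_iff.2 (by linarith)) hy)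
  · exact .inr (hy.trans_le (EReal.coe_le_coe_iff.2 (by linarith)))

lemma jmap_preimage_compl_awayFrom (t δ : ℝ) :
    jmap ⁻¹' (awayFrom t δ)ᶜ = Icc (t - δ) (t + δ) := by
  ext s
  change ¬ (((t + δ : ℝ) : EReal) < s ∨ (s : EReal) < ((t - δ : ℝ) : EReal)) ↔ _
  simp only [EReal.coe_lt_coe_iff, not_or, not_lt, mem_Icc]
  exact and_comm

lemma iUnion_awayFrom (t : ℝ) :
    ⋃ n : ℕ, awayFrom t (1 / (n + 1)) = {y : IR | (t : EReal) < y.1.1 ∨ y.1.2 < t} := by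
  ext y
  simp only [awayFrom, mem_iUnion, mem_union, mem_ofPred_eq]
  constructor
  · rintro ⟨n, h | h⟩
    · exact .inl ((EReal.coe_lt_coe_iff.2 (lt_add_of_pos_right _ Nat.one_div_pos_of_nat)).trans h)
    · exact .inr (h.trans (EReal.coe_lt_coe_iff.2 (sub_lt_self _ Nat.one_div_pos_of_nat)))
  · rintro (h | h)
    · obtain ⟨c, htc, hc⟩ := EReal.lt_iff_exists_real_btwn.1 h
      obtain ⟨n, hn⟩ := exists_nat_one_div_lt (sub_pos.2 (EReal.coe_lt_coe_iff.1 htc))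
      exact ⟨n, .inl (lt_trans (EReal.coe_lt_coe_iff.2 (by linarith)) hc)⟩
    · obtain ⟨c, hc, hct⟩ := EReal.lt_iff_exists_real_btwn.1 h
      obtain ⟨n, hn⟩ := exists_nat_one_div_lt (sub_pos.2 (EReal.coe_lt_coe_iff.1 hct))
      exact ⟨n, .inr (hc.trans (EReal.coe_lt_coe_iff.2 (by linarith)))⟩

lemma IsCompact.exists_subset_awayFrom {Q : Set IR} (hQ : IsCompact Q) (hQup : IsUpperSet Q)
    {t : ℝ} (ht : jmap t ∉ Q) : ∃ δ > 0, Q ⊆ awayFrom t δ := by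
  have hcover : Q ⊆ ⋃ n : ℕ, awayFrom t (1 / (n + 1)) := by
    rw [iUnion_awayFrom]
    intro y hy
    have hyt : ¬ y ≤ jmap t := fun h => ht (hQup h hy)
    rwa [IR.le_iff, not_and_or, not_le, not_le] at hyt
  obtain ⟨n, hn⟩ := hQ.elim_directed_cover _ (fun n => isOpen_awayFrom _ _) hcover
    (Monotone.directed_le fun m n hmn => awayFrom_subset_awayFrom (Nat.one_div_le_one_div hmn))
  exact ⟨_, Nat.one_div_pos_of_nat, hn⟩

lemma KIR_subset_of_isCompact {Q : Set IR} (hQ : IsCompact Q) (hQsat : IsSaturated Q)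
    (hQs : IsSupport lebIR Q) : KIR ⊆ Q := by
  rintro _ ⟨t, ht, rfl⟩
  by_contra h
  obtain ⟨δ, hδ, hQδ⟩ := hQ.exists_subset_awayFrom hQsat.isUpperSet h
  refine hQs.jmap_preimage_compl_notMem_nhds (isOpen_awayFrom t δ).measurableSet hQδ ht ?_
  rw [jmap_preimage_compl_awayFrom]
  exact Icc_mem_nhds (by linarith) (by linarith)

lemma KIR_eq : KIR = {x : IR | x.1.2 ≤ x.1.1 ∧ 0 ≤ x.1.1 ∧ x.1.2 ≤ 1} := by
  ext ⟨⟨a, b⟩, hab⟩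
  constructor
  · rintro ⟨t, ht, h⟩
    cases h
    exact ⟨le_rfl, EReal.coe_nonneg.2 ht.1, EReal.coe_le_coe_iff.2 ht.2⟩
  · rintro ⟨hba, ha0, hb1⟩
    obtain rfl : a = b := le_antisymm hab hba
    lift a to ℝ using ⟨ne_top_of_le_ne_top (EReal.coe_ne_top 1) hb1,
      ne_bot_of_le_ne_bot EReal.zero_ne_bot ha0⟩
    exact ⟨a, ⟨EReal.coe_nonneg.1 ha0, (EReal.coe_le_coe_iff (y := 1)).1 hb1⟩, rfl⟩

lemma measurableSet_KIR : MeasurableSet KIR := by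
  rw [KIR_eq]
  exact (measurableSet_le IR.measurable_snd IR.measurable_fst).inter
    ((measurableSet_le measurable_const IR.measurable_fst).inter
      (measurableSet_le IR.measurable_snd measurable_const))

lemma lebIR_KIR : lebIR KIR = 1 := by
  have hIcc : Icc (0 : ℝ) 1 ⊆ jmap ⁻¹' KIR := fun s hs => ⟨s, hs, rfl⟩
  rw [lebIR_apply measurableSet_KIR, inter_eq_right.2 hIcc, Real.volume_Icc]
  simp

lemma lebIR_compl_KIR : lebIR KIRᶜ = 0 := by
  rw [lebIR_apply measurableSet_KIR.compl]
  exact measure_mono_null (fun s hs => hs.1 ⟨s, hs.2, rfl⟩) measure_empty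

lemma dclIR_KIR : dclIR KIR = {x : IR | x.1.1 ≤ 1 ∧ 0 ≤ x.1.2} := by
  ext x
  constructor
  · rintro ⟨_, ⟨t, ht, rfl⟩, hlo, hhi⟩
    exact ⟨hlo.trans (EReal.coe_le_coe_iff.2 ht.2), (EReal.coe_nonneg.2 ht.1).trans hhi⟩
  · rintro ⟨h1, h0⟩
    have hm0 : 0 ≤ max x.1.1 0 := le_max_right _ _
    have hm1 : max x.1.1 0 ≤ 1 := max_le h1 zero_le_one
    obtain ⟨t, ht⟩ : ∃ t : ℝ, (t : EReal) = max x.1.1 0 :=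
      ⟨_, EReal.coe_toReal (ne_top_of_le_ne_top (EReal.coe_ne_top 1) hm1)
        (ne_bot_of_le_ne_bot EReal.zero_ne_bot hm0)⟩
    rw [← ht] at hm0 hm1
    have htK : jmap t ∈ KIR :=
      ⟨t, ⟨EReal.coe_nonneg.1 hm0, (EReal.coe_le_coe_iff (y := 1)).1 hm1⟩, rfl⟩
    refine ⟨jmap t, htK, ?_⟩
    change x.1.1 ≤ (t : EReal) ∧ (t : EReal) ≤ x.1.2
    rw [ht]
    exact ⟨le_max_left _ _, max_le x.2 h0⟩

lemma isClosed_dclIR_KIR : IsClosed (dclIR KIR) := by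
  rw [dclIR_KIR, ← isOpen_compl_iff, compl_ofPred]
  simp only [not_and_or, not_le, ofPred_or]
  exact (IR.isOpen_lt_fst 1).union (IR.isOpen_snd_lt 0)

theorem lebIR_supports_general :
    (∀ Q : Set IR, IsCompact Q → IsSaturated Q → IsSupport lebIR Q → KIR ⊆ Q) ∧
    (MeasurableSet KIR ∧ lebIR KIR = 1 ∧ IsSupport lebIR KIR) ∧
    (IsClosed (dclIR KIR) ∧ IsSupport lebIR (dclIR KIR) ∧
      ∀ C : Set IR, IsClosed C → IsSupport lebIR C → dclIR KIR ⊆ C) := by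
  have hK : IsSupport lebIR KIR := isSupport_of_measure_compl_eq_zero lebIR_compl_KIR
  refine ⟨fun Q hQ hQsat hQs => KIR_subset_of_isCompact hQ hQsat hQs,
    ⟨measurableSet_KIR, lebIR_KIR, hK⟩, isClosed_dclIR_KIR,
    hK.mono fun x hx => ⟨x, hx, le_rfl⟩, fun C hC hCs => ?_⟩
  rintro x ⟨y, hy, hxy⟩
  exact Topology.IsScott.isLowerSet_of_isClosed hC hxy (KIR_subset_of_isClosed hC hCs hy)

/-- Every compact saturated support of `j[λ]` contains `K`; `K` is itself a measurable
support of `j[λ]` with `j[λ](K) = 1`; and `↓K` is the smallest closed support of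
`j[λ]`. -/
theorem lebIR_supports (hjm : Measurable jmap) :
    (∀ Q : Set IR, IsCompact Q → IsSaturated Q → IsSupport lebIR Q → KIR ⊆ Q) ∧
    (MeasurableSet KIR ∧ lebIR KIR = 1 ∧ IsSupport lebIR KIR) ∧
    (IsClosed (dclIR KIR) ∧ IsSupport lebIR (dclIR KIR) ∧
      ∀ C : Set IR, IsClosed C → IsSupport lebIR C → dclIR KIR ⊆ C) :=
  lebIR_supports_general
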